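/- Suppose h_max has a unique minimizer b_g over {0,1}^n, with λ₁ = h_max(b_g) > 0, λ₂ = min over b ≠ b_g of h_max(b), and r = (λ₂ − λ₁)/λ₁. Then for every positive integer p, setting ν₁ = h_p(b_g) and ν₂ = min over b ≠ b_g of h_p(b), the ratio of the approximated energies grows polynomially in the approximation level: ν₂/ν₁ ≥ (1/M) · (r + 1)^p. -/

import Mathlib

/-!
Every `h m b_g` is at most `λ₁`, so `ν₁ ≤ M λ₁^p`. For `b ≠ b_g`, `h_max(b)^p` is one of the
summands of `h_p(b)` and `h_max(b) ≥ λ₂ ≥ 0`, so `ν₂ ≥ λ₂^p`. Dividing,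
`ν₂/ν₁ ≥ λ₂^p / (M λ₁^p) = (1/M)(r + 1)^p`.
-/

open Finset Set

section PowerSums

variable {ι : Type*} [Fintype ι] {f : ι → ℝ} {a : ℝ}

theorem sum_pow_le_card_mul_pow (hf : ∀ i, 0 ≤ f i) (hfa : ∀ i, f i ≤ a) (p : ℕ) :
    ∑ i, f i ^ p ≤ Fintype.card ι * a ^ p := by
  calc ∑ i, f i ^ p ≤ ∑ _i : ι, a ^ p :=
        sum_le_sum fun i _ => pow_le_pow_left₀ (hf i) (hfa i) p
    _ = Fintype.card ι * a ^ p := by simp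

theorem pow_le_sum_pow_of_isGreatest (hf : ∀ i, 0 ≤ f i) (ha : IsGreatest (range f) a)
    (p : ℕ) : a ^ p ≤ ∑ i, f i ^ p := by
  obtain ⟨i, rfl⟩ := ha.1
  exact single_le_sum (f := fun j => f j ^ p) (fun j _ => pow_nonneg (hf j) p) (mem_univ i)

end PowerSums

theorem pow_le_of_isLeast_image {β : Type*} {s : Set β} {g G : β → ℝ} {l ν : ℝ} (p : ℕ)
    (hg : ∀ b, 0 ≤ g b) (hgG : ∀ b, g b ^ p ≤ G b)
    (hl : IsLeast (g '' s) l) (hν : IsLeast (G '' s) ν) : l ^ p ≤ ν := by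
  obtain ⟨b, hb, rfl⟩ := hν.1
  have hl_nonneg : 0 ≤ l := by
    obtain ⟨c, -, rfl⟩ := hl.1
    exact hg c
  calc l ^ p ≤ g b ^ p := pow_le_pow_left₀ hl_nonneg (hl.2 ⟨b, hb, rfl⟩) p
    _ ≤ G b := hgG b

theorem one_div_mul_div_pow_le_div {c l₁ l₂ ν₁ ν₂ : ℝ} (p : ℕ) (hl₁ : 0 < l₁) (hl₂ : 0 ≤ l₂)
    (hν₁ : 0 < ν₁) (hν₁_le : ν₁ ≤ c * l₁ ^ p) (hν₂ : l₂ ^ p ≤ ν₂) :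
    1 / c * (l₂ / l₁) ^ p ≤ ν₂ / ν₁ := by
  have hc : 0 < c := pos_of_mul_pos_left (hν₁.trans_le hν₁_le) (pow_pos hl₁ p).le
  calc 1 / c * (l₂ / l₁) ^ p = l₂ ^ p / (c * l₁ ^ p) := by
        rw [div_pow]
        field_simp
    _ ≤ ν₂ / ν₁ := div_le_div₀ ((pow_nonneg hl₂ p).trans hν₂) hν₂ hν₁ hν₁_le

theorem moqa_energy_ratio_growth_general
    (n M p : ℕ)
    (h : Fin M → (Fin n → Bool) → ℝ)
    (hnn : ∀ m b, 0 ≤ h m b)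
    (hmax hP : (Fin n → Bool) → ℝ)
    (hmax_def : ∀ b, IsGreatest (Set.range fun m => h m b) (hmax b))
    (hP_def : ∀ b, hP b = ∑ m : Fin M, (h m b) ^ p)
    (bg : Fin n → Bool)
    (lam1 lam2 r : ℝ)
    (hlam1 : lam1 = hmax bg)
    (hlam1pos : 0 < lam1)
    (hlam2 : IsLeast (hmax '' {b | b ≠ bg}) lam2)
    (hr : r = (lam2 - lam1) / lam1)
    (nu1 nu2 : ℝ)
    (hnu1 : nu1 = hP bg)
    (hnu2 : IsLeast (hP '' {b | b ≠ bg}) nu2) :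
    nu2 / nu1 ≥ (1 / (M : ℝ)) * (r + 1) ^ p := by
  have hmax_pow_le (b) : hmax b ^ p ≤ hP b :=
    hP_def b ▸ pow_le_sum_pow_of_isGreatest (hnn · b) (hmax_def b) p
  have hmax_nonneg (b) : 0 ≤ hmax b := by
    obtain ⟨m, hm⟩ := (hmax_def b).1
    exact hm ▸ hnn m b
  have hnu1_pos : 0 < nu1 := hnu1 ▸ (pow_pos (hlam1 ▸ hlam1pos) p).trans_le (hmax_pow_le bg)
  have hnu1_le : nu1 ≤ M * lam1 ^ p := by
    simpa [hnu1, hP_def] using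
      sum_pow_le_card_mul_pow (hnn · bg) (fun m => hlam1 ▸ (hmax_def bg).2 ⟨m, rfl⟩) p
  have hlam2_nonneg : 0 ≤ lam2 := by
    obtain ⟨b, -, rfl⟩ := hlam2.1
    exact hmax_nonneg b
  have hnu2_ge : lam2 ^ p ≤ nu2 := pow_le_of_isLeast_image p hmax_nonneg hmax_pow_le hlam2 hnu2
  have hr1 : r + 1 = lam2 / lam1 := by
    rw [hr]
    field_simp
    ring
  rw [ge_iff_le, hr1]
  exact one_div_mul_div_pow_le_div p hlam1pos hlam2_nonneg hnu1_pos hnu1_le hnu2_ge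

/-- **Polynomial growth of the approximated energy ratio.**
If `h_max` has a unique minimizer `b_g`, with `λ₁ = h_max(b_g) > 0`,
`λ₂ = min_{b ≠ b_g} h_max(b)` and `r = (λ₂ − λ₁)/λ₁`, then for every positive
integer `p`, with `ν₁ = h_p(b_g)` and `ν₂ = min_{b ≠ b_g} h_p(b)`,
`ν₂/ν₁ ≥ (1/M) · (r + 1)^p`. -/
theorem moqa_energy_ratio_growth
    (n M p : ℕ) (hM : 1 ≤ M) (hp : 1 ≤ p) (hn : 1 ≤ n)
    (h : Fin M → (Fin n → Bool) → ℝ)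
    (hnn : ∀ m b, 0 ≤ h m b)
    (hmax hP : (Fin n → Bool) → ℝ)
    (hmax_def : ∀ b, IsGreatest (Set.range fun m => h m b) (hmax b))
    (hP_def : ∀ b, hP b = ∑ m : Fin M, (h m b) ^ p)
    (bg : Fin n → Bool)
    (hunique : ∀ b ≠ bg, hmax bg < hmax b)
    (lam1 lam2 r : ℝ)
    (hlam1 : lam1 = hmax bg)
    (hlam1pos : 0 < lam1)
    (hlam2 : IsLeast (hmax '' {b | b ≠ bg}) lam2)
    (hr : r = (lam2 - lam1) / lam1)
    (nu1 nu2 : ℝ)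
    (hnu1 : nu1 = hP bg)
    (hnu2 : IsLeast (hP '' {b | b ≠ bg}) nu2) :
    nu2 / nu1 ≥ (1 / (M : ℝ)) * (r + 1) ^ p :=
  moqa_energy_ratio_growth_general n M p h hnn hmax hP hmax_def hP_def bg lam1 lam2 r hlam1 hlam1pos
    hlam2 hr nu1 nu2 hnu1 hnu2
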